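/- Let v be a complete valuation on the lattice L of downsets of a finite poset P. Define two linear orders on P: x ≤₁ y iff v(↓x) ≤ v(↓y), and x ≤₂ y iff v'(↑y) ≤ v'(↑x), where v'(B) = Σ_{x∈B} w(x) for upsets B and w is the weight function of v. Then {≤₁, ≤₂} is a realizer of P: for all x, y ∈ P, x ≤ y in P if and only if x ≤₁ y and x ≤₂ y. -/
import Mathlib


open Finset

variable (P : Type*) [PartialOrder P] [Fintype P] [DecidableEq P]

/-- The lattice of downsets (lower sets) of a finite poset `P`. -/
def DownSet : Type _ := {A : Finset P // IsLowerSet (↑A : Set P)}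

variable {P}

instance : Lattice (DownSet P) :=
  Subtype.lattice (fun _ _ hA hB => by simpa [Finset.sup_eq_union] using hA.union hB)
    (fun _ _ hA hB => by simpa [Finset.inf_eq_inter] using hA.inter hB)

instance : OrderBot (DownSet P) :=
  Subtype.orderBot (by simp [Finset.bot_eq_empty, isLowerSet_empty])

noncomputable instance : Fintype (DownSet P) :=
  Fintype.ofInjective Subtype.val Subtype.val_injective

/-- The valuation associated to a weight function `w`. -/
def vval (w : P → ℕ) (A : DownSet P) : ℕ := ∑ x ∈ A.1, w x

variable [DecidableRel ((· ≤ ·) : P → P → Prop)]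

/-- The principal downset of `y`. -/
def pd (y : P) : DownSet P :=
  ⟨univ.filter (· ≤ y), by
    intro a b hba ha
    simp only [coe_filter, Set.mem_setOf_eq, mem_univ, true_and] at *
    exact hba.trans ha⟩

/-- The dual valuation evaluated on the principal upset of `x`. -/
def vup (w : P → ℕ) (x : P) : ℕ := ∑ z ∈ univ.filter (fun z => x ≤ z), w z

/-- `T` is an initial segment for the valuation `v`. -/
def Initial (v : DownSet P → ℕ) (T : Set (DownSet P)) : Prop :=
  ∃ j, v '' T = {k | k < j}

/-- `T` is a final segment for the valuation `v`. -/
def Final (v : DownSet P → ℕ) (T : Set (DownSet P)) : Prop :=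
  ∃ j, v '' T = {k | j ≤ k ∧ k < Fintype.card (DownSet P)}

/-- The set of arbitrary (nonempty) joins of elements of `T`. -/
def joinSet (T : Set (DownSet P)) : Set (DownSet P) :=
  {a | ∃ S : Finset (DownSet P), ↑S ⊆ T ∧ ∃ hS : S.Nonempty, a = S.sup' hS id}

/-- The set of arbitrary (nonempty) meets of elements of `T`. -/
def meetSet (T : Set (DownSet P)) : Set (DownSet P) :=
  {a | ∃ S : Finset (DownSet P), ↑S ⊆ T ∧ ∃ hS : S.Nonempty, a = S.inf' hS id}

/-- A complete valuation: bijective onto `{0,…,|L|-1}`, join-closures of initial segments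
are initial segments, meet-closures of final segments are final segments. -/
def IsCompleteValuation (w : P → ℕ) : Prop :=
  Set.BijOn (vval w) Set.univ {k | k < Fintype.card (DownSet P)} ∧
  (∀ T, Initial (vval w) T → Initial (vval w) (joinSet T)) ∧
  (∀ T, Final (vval w) T → Final (vval w) (meetSet T))

/-- The complementary order from two linear orders: `x ≤' y` iff `le1 x y` and `le2 y x`. -/
def le'' (le1 le2 : P → P → Prop) (x y : P) : Prop := le1 x y ∧ le2 y x

/-- The number of chains (under the complementary order) with maximum element `y`. -/
noncomputable def chainCount (le1 le2 : P → P → Prop) (y : P) : ℕ :=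
  Set.ncard {C : Finset P | y ∈ C ∧ (∀ a ∈ C, le'' le1 le2 a y) ∧
    ∀ a ∈ C, ∀ b ∈ C, le'' le1 le2 a b ∨ le'' le1 le2 b a}

/-- `{le1, le2}` is a realizer of `P`. -/
def IsRealizer (le1 le2 : P → P → Prop) : Prop :=
  IsLinearOrder P le1 ∧ IsLinearOrder P le2 ∧ ∀ x y : P, x ≤ y ↔ le1 x y ∧ le2 x y
section Helpers

variable (w : P → ℕ)

lemma vval_le_of_subset {A B : DownSet P} (h : A.1 ⊆ B.1) : vval w A ≤ vval w B :=
  Finset.sum_le_sum_of_subset h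

lemma mem_pd {t s : P} : s ∈ (pd t).1 ↔ s ≤ t := by simp [pd]

lemma pd_subset {t : P} {A : DownSet P} (ht : t ∈ A.1) : (pd t).1 ⊆ A.1 := by
  intro s hs
  exact A.2 (mem_pd.1 hs) ht

lemma downset_sup_val (A B : DownSet P) : (A ⊔ B).1 = A.1 ∪ B.1 := by
  rw [← Finset.sup_eq_union]; rfl

lemma downset_inf_val (A B : DownSet P) : (A ⊓ B).1 = A.1 ∩ B.1 := by
  rw [← Finset.inf_eq_inter]; rfl

lemma downset_le_iff {A B : DownSet P} : A ≤ B ↔ A.1 ⊆ B.1 := Iff.rfl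

lemma mem_sup'_iff {S : Finset (DownSet P)} (hS : S.Nonempty) {t : P} :
    t ∈ (S.sup' hS id).1 ↔ ∃ A ∈ S, t ∈ A.1 := by
  constructor
  · intro ht
    refine Finset.sup'_induction (p := fun B : DownSet P => (∀ s ∈ B.1, ∃ A ∈ S, s ∈ A.1))
      hS id ?_ ?_ t ht
    · intro a₁ h₁ a₂ h₂ s hs
      rw [downset_sup_val, Finset.mem_union] at hs
      rcases hs with hs | hs
      · exact h₁ s hs
      · exact h₂ s hs
    · intro b hb s hs
      exact ⟨b, hb, hs⟩
  · rintro ⟨A, hA, htA⟩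
    exact downset_le_iff.1 (Finset.le_sup' id hA) htA

lemma mem_inf'_iff {S : Finset (DownSet P)} (hS : S.Nonempty) {t : P} :
    t ∈ (S.inf' hS id).1 ↔ ∀ A ∈ S, t ∈ A.1 := by
  constructor
  · intro ht A hA
    exact downset_le_iff.1 (Finset.inf'_le id hA) ht
  · intro hall
    refine Finset.inf'_induction (p := fun B : DownSet P => t ∈ B.1) hS id ?_ hall
    intro a₁ h₁ a₂ h₂
    rw [downset_inf_val, Finset.mem_inter]
    exact ⟨h₁, h₂⟩

end Helpers

section Core

set_option linter.unusedSectionVars false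

variable (w : P → ℕ)

lemma vval_injective (h : IsCompleteValuation w) {A B : DownSet P}
    (heq : vval w A = vval w B) : A = B :=
  h.1.2.1 (Set.mem_univ A) (Set.mem_univ B) heq

lemma vval_lt_card (h : IsCompleteValuation w) (A : DownSet P) :
    vval w A < Fintype.card (DownSet P) :=
  h.1.1 (Set.mem_univ A)

lemma vval_surj (h : IsCompleteValuation w) {k : ℕ} (hk : k < Fintype.card (DownSet P)) :
    ∃ A : DownSet P, vval w A = k := by
  obtain ⟨A, -, hA⟩ := h.1.2.2 hk
  exact ⟨A, hA⟩

lemma vd_lt_vd (h : IsCompleteValuation w) {s u : P} (hsu : s ≤ u) (hne : s ≠ u) :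
    vval w (pd s) < vval w (pd u) := by
  refine lt_of_le_of_ne (vval_le_of_subset w ?_) ?_
  · intro t ht
    exact mem_pd.2 ((mem_pd.1 ht).trans hsu)
  · intro heq
    have hpd := vval_injective w h heq
    have : u ∈ (pd s).1 := by rw [hpd]; exact mem_pd.2 le_rfl
    exact hne (le_antisymm hsu (mem_pd.1 this))

/-- The downset of all elements whose principal downset has smaller valuation than `u`'s. -/
def below (u : P) : DownSet P :=
  ⟨univ.filter (fun t => vval w (pd t) < vval w (pd u)), by
    intro a b hba ha
    simp only [coe_filter, Set.mem_setOf_eq, mem_univ, true_and] at *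
    refine lt_of_le_of_lt (vval_le_of_subset w ?_) ha
    intro s hs
    exact mem_pd.2 ((mem_pd.1 hs).trans hba)⟩

lemma mem_below {u t : P} : t ∈ (below w u).1 ↔ vval w (pd t) < vval w (pd u) := by
  simp [below]

/-- Lemma J : the join-completeness instance at the principal value of `u`. -/
lemma lemJ (h : IsCompleteValuation w) (u : P) :
    vval w (below w u) < vval w (pd u) := by
  set T : Set (DownSet P) := {A | vval w A < vval w (pd u)} with hT
  have hInit : Initial (vval w) T := by
    refine ⟨vval w (pd u), Set.ext fun k => ?_⟩
    constructor
    · rintro ⟨A, hA, rfl⟩; exact hA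
    · intro hk
      obtain ⟨A, hA⟩ := vval_surj w h (hk.trans (vval_lt_card w h (pd u)))
      exact ⟨A, by simpa [hT, hA] using hk, hA⟩
  obtain ⟨j, hj⟩ := h.2.1 T hInit
  set S : Finset (DownSet P) := univ.filter (fun A => vval w A < vval w (pd u)) with hSdef
  have hScoe : ↑S ⊆ T := by
    intro A hA
    simp only [hSdef, coe_filter, Set.mem_setOf_eq, mem_univ, true_and] at hA
    exact hA
  set E : DownSet P := ⟨∅, by rw [Finset.coe_empty]; exact isLowerSet_empty⟩ with hEdef
  have hbot : vval w E = 0 := by simp [vval, hEdef]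
  have hupos : 0 < vval w (pd u) := by
    rcases Nat.eq_zero_or_pos (vval w (pd u)) with h0 | h0
    · exfalso
      have hEpd : E = pd u := vval_injective w h (by rw [hbot, h0])
      have : u ∈ E.1 := by rw [hEpd]; exact mem_pd.2 le_rfl
      simp [hEdef] at this
    · exact h0
  have hS : S.Nonempty := ⟨E, by simp [hSdef, hbot, hupos]⟩
  have hMeq : S.sup' hS id = below w u := by
    apply Subtype.ext
    apply Finset.ext
    intro t
    rw [mem_sup'_iff hS, mem_below]
    constructor
    · rintro ⟨A, hA, htA⟩
      simp only [hSdef, mem_filter, mem_univ, true_and] at hA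
      exact lt_of_le_of_lt (vval_le_of_subset w (pd_subset htA)) hA
    · intro ht
      exact ⟨pd t, by simp [hSdef, ht], mem_pd.2 le_rfl⟩
  have hMmem : below w u ∈ joinSet T := ⟨S, hScoe, hS, hMeq.symm⟩
  have hpdnot : pd u ∉ joinSet T := by
    rintro ⟨S', hS'T, hS', heq⟩
    have hu : u ∈ (S'.sup' hS' id).1 := by
      rw [← heq]; exact mem_pd.2 le_rfl
    obtain ⟨A, hA, huA⟩ := (mem_sup'_iff hS').1 hu
    have hAT : vval w A < vval w (pd u) := hS'T hA
    exact absurd (lt_of_le_of_lt (vval_le_of_subset w (pd_subset huA)) hAT) (lt_irrefl _)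
  by_contra hle
  push_neg at hle
  have h1 : vval w (below w u) ∈ {k | k < j} := hj ▸ ⟨below w u, hMmem, rfl⟩
  have h2 : vval w (pd u) ∈ {k | k < j} := lt_of_le_of_lt hle h1
  rw [← hj] at h2
  obtain ⟨B, hB, hBval⟩ := h2
  exact hpdnot (vval_injective w h hBval ▸ hB)

lemma w_pos (h : IsCompleteValuation w) (u : P) : 0 < w u := by
  have hlow : IsLowerSet (↑(insert u (below w u).1) : Set P) := by
    intro a b hba ha
    simp only [Finset.coe_insert, Set.mem_insert_iff, Finset.mem_coe] at *
    rcases ha with rfl | ha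
    · rcases eq_or_ne b a with rfl | hne
      · exact Or.inl rfl
      · exact Or.inr ((mem_below w).2 (vd_lt_vd w h hba hne))
    · exact Or.inr ((below w u).2 hba ha)
  set B : DownSet P := ⟨insert u (below w u).1, hlow⟩ with hBdef
  have hsub : (pd u).1 ⊆ B.1 := by
    intro s hs
    rcases eq_or_ne s u with rfl | hne
    · exact Finset.mem_insert_self _ _
    · exact Finset.mem_insert_of_mem ((mem_below w).2 (vd_lt_vd w h (mem_pd.1 hs) hne))
  have hnotmem : u ∉ (below w u).1 := by simp [mem_below w]
  have hBsum : vval w B = w u + vval w (below w u) := Finset.sum_insert hnotmem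
  have h1 : vval w (pd u) ≤ vval w B := vval_le_of_subset w hsub
  have h2 := lemJ w h u
  omega

/-- The complement of the principal upset of `x`, as a downset. -/
def compUp (x : P) : DownSet P :=
  ⟨univ.filter (fun t => ¬ x ≤ t), by
    intro a b hba ha
    simp only [coe_filter, Set.mem_setOf_eq, mem_univ, true_and] at *
    exact fun hxb => ha (hxb.trans hba)⟩

lemma mem_compUp {x t : P} : t ∈ (compUp x).1 ↔ ¬ x ≤ t := by simp [compUp]

lemma compUp_add_vup (x : P) : vval w (compUp x) + vup w x = ∑ t, w t := by
  have := Finset.sum_filter_add_sum_filter_not univ (fun t => x ≤ t) w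
  show (∑ t ∈ univ.filter (fun t => ¬ x ≤ t), w t) + (∑ t ∈ univ.filter (fun t => x ≤ t), w t)
      = ∑ t, w t
  omega

end Core

section Final

set_option linter.unusedSectionVars false

variable (w : P → ℕ)

lemma vup_anti {a b : P} (hba : b ≤ a) : vup w a ≤ vup w b := by
  apply Finset.sum_le_sum_of_subset
  intro s hs
  simp only [mem_filter, mem_univ, true_and] at *
  exact hba.trans hs

lemma key_down (h : IsCompleteValuation w) {x y : P} (hxy : ¬ x ≤ y)
    (hv : vval w (pd x) < vval w (pd y)) : w x < w y := by
  set M := below w y with hMdef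
  set A := compUp x with hAdef
  have hlow : IsLowerSet (↑(insert y (M.1 ∩ A.1)) : Set P) := by
    intro a b hba ha
    simp only [Finset.coe_insert, Set.mem_insert_iff, Finset.mem_coe, Finset.mem_inter] at *
    rcases ha with rfl | ⟨haM, haA⟩
    · rcases eq_or_ne b a with rfl | hne
      · exact Or.inl rfl
      · refine Or.inr ⟨(mem_below w).2 (vd_lt_vd w h hba hne), mem_compUp.2 ?_⟩
        exact fun hxb => hxy (hxb.trans hba)
    · exact Or.inr ⟨M.2 hba haM, A.2 hba haA⟩
  set B : DownSet P := ⟨insert y (M.1 ∩ A.1), hlow⟩ with hBdef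
  have hsub : (pd y).1 ⊆ B.1 := by
    intro s hs
    rcases eq_or_ne s y with rfl | hne
    · exact Finset.mem_insert_self _ _
    · exact Finset.mem_insert_of_mem (Finset.mem_inter.2
        ⟨(mem_below w).2 (vd_lt_vd w h (mem_pd.1 hs) hne),
         mem_compUp.2 fun hxs => hxy (hxs.trans (mem_pd.1 hs))⟩)
  have hynot : y ∉ M.1 ∩ A.1 := fun hy =>
    absurd ((mem_below w).1 (Finset.mem_inter.1 hy).1) (lt_irrefl _)
  have hBsum : vval w B = w y + ∑ t ∈ M.1 ∩ A.1, w t := Finset.sum_insert hynot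
  have hxnot : x ∉ M.1 ∩ A.1 := fun hx =>
    (mem_compUp.1 (Finset.mem_inter.1 hx).2) le_rfl
  have hxM : x ∈ M.1 := (mem_below w).2 hv
  have hsub2 : insert x (M.1 ∩ A.1) ⊆ M.1 := by
    intro s hs
    rcases Finset.mem_insert.1 hs with rfl | hs
    · exact hxM
    · exact (Finset.mem_inter.1 hs).1
  have h1 : vval w (pd y) ≤ vval w B := vval_le_of_subset w hsub
  have h2 : w x + ∑ t ∈ M.1 ∩ A.1, w t ≤ vval w M := by
    have := Finset.sum_le_sum_of_subset (f := w) hsub2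
    rwa [Finset.sum_insert hxnot] at this
  have h3 := lemJ w h y
  rw [← hMdef] at h3
  omega

/-- The downset of all elements whose principal upset has valuation at least that of `u`. -/
def aboveGe (u : P) : DownSet P :=
  ⟨univ.filter (fun t => vup w u ≤ vup w t), by
    intro a b hba ha
    simp only [coe_filter, Set.mem_setOf_eq, mem_univ, true_and] at *
    exact le_trans ha (vup_anti w hba)⟩

lemma mem_aboveGe {u t : P} : t ∈ (aboveGe w u).1 ↔ vup w u ≤ vup w t := by
  simp [aboveGe]

/-- Lemma M : the meet-completeness instance at the co-principal value of `u`. -/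
lemma lemM (h : IsCompleteValuation w) (u : P) :
    vval w (compUp u) < vval w (aboveGe w u) := by
  set F : Set (DownSet P) := {A | vval w (compUp u) < vval w A} with hF
  have hFin : Final (vval w) F := by
    refine ⟨vval w (compUp u) + 1, Set.ext fun k => ?_⟩
    constructor
    · rintro ⟨A, hA, rfl⟩
      exact ⟨hA, vval_lt_card w h A⟩
    · rintro ⟨h1, h2⟩
      obtain ⟨A, hA⟩ := vval_surj w h h2
      exact ⟨A, by simp only [hF, Set.mem_setOf_eq, hA]; omega, hA⟩
  obtain ⟨j, hj⟩ := h.2.2 F hFin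
  set S : Finset (DownSet P) := univ.filter (fun A => vval w (compUp u) < vval w A) with hSdef
  have hScoe : ↑S ⊆ F := by
    intro A hA
    simp only [hSdef, coe_filter, Set.mem_setOf_eq, mem_univ, true_and] at hA
    exact hA
  set Pfull : DownSet P := ⟨univ, by intro a b _ _; simp⟩ with hPf
  have hwu : 0 < w u := w_pos w h u
  have hvupu : w u ≤ vup w u :=
    Finset.single_le_sum (f := fun t => w t) (fun i _ => Nat.zero_le _) (by simp)
  have hfull : vval w (compUp u) < vval w Pfull := by
    have h1 := compUp_add_vup w u
    have h2 : vval w Pfull = ∑ t, w t := rfl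
    omega
  have hS : S.Nonempty := ⟨Pfull, by simp [hSdef, hfull]⟩
  have hQeq : S.inf' hS id = aboveGe w u := by
    apply Subtype.ext
    apply Finset.ext
    intro t
    rw [mem_inf'_iff hS, mem_aboveGe]
    constructor
    · intro hall
      by_contra hlt
      push_neg at hlt
      have hDt : vval w (compUp u) < vval w (compUp t) := by
        have h1 := compUp_add_vup w u
        have h2 := compUp_add_vup w t
        omega
      have := hall (compUp t) (by simp [hSdef, hDt])
      exact (mem_compUp.1 this) le_rfl
    · intro hge A hA
      by_contra htA
      have hsub : A.1 ⊆ (compUp t).1 := by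
        intro s hs
        exact mem_compUp.2 fun hts => htA (A.2 hts hs)
      have h1 : vval w A ≤ vval w (compUp t) := vval_le_of_subset w hsub
      have h2 : vval w (compUp t) ≤ vval w (compUp u) := by
        have h3 := compUp_add_vup w u
        have h4 := compUp_add_vup w t
        omega
      simp only [hSdef, mem_filter, mem_univ, true_and] at hA
      omega
  have hQmem : aboveGe w u ∈ meetSet F := ⟨S, hScoe, hS, hQeq.symm⟩
  have hnot : compUp u ∉ meetSet F := by
    rintro ⟨S', hS'F, hS', heq⟩
    have hu : u ∉ (S'.inf' hS' id).1 := by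
      rw [← heq]
      exact fun hmem => (mem_compUp.1 hmem) le_rfl
    rw [mem_inf'_iff hS'] at hu
    push_neg at hu
    obtain ⟨A, hA, huA⟩ := hu
    have hsub : A.1 ⊆ (compUp u).1 := by
      intro s hs
      exact mem_compUp.2 fun hus => huA (A.2 hus hs)
    have h1 := vval_le_of_subset w hsub
    have hAF : vval w (compUp u) < vval w A := hS'F hA
    omega
  by_contra hle
  push_neg at hle
  have h1 : vval w (aboveGe w u) ∈ {k | j ≤ k ∧ k < Fintype.card (DownSet P)} :=
    hj ▸ ⟨aboveGe w u, hQmem, rfl⟩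
  have h2 : vval w (compUp u) ∈ {k | j ≤ k ∧ k < Fintype.card (DownSet P)} :=
    ⟨le_trans h1.1 hle, vval_lt_card w h _⟩
  rw [← hj] at h2
  obtain ⟨B, hB, hBval⟩ := h2
  exact hnot (vval_injective w h hBval ▸ hB)

lemma key_up (h : IsCompleteValuation w) {x y : P} (hxy : ¬ x ≤ y) (hv : vup w y < vup w x) :
    w y < w x := by
  set Nx := univ.filter (fun t => vup w t < vup w x) with hNdef
  set U := univ.filter (fun t => ¬ t ≤ y) with hUdef
  have hNlt : (∑ t ∈ Nx, w t) < vup w x := by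
    have h1 := lemM w h x
    have h2 := compUp_add_vup w x
    have h3 : vval w (aboveGe w x) = ∑ t ∈ univ.filter (fun t => vup w x ≤ vup w t), w t := rfl
    have h4 : (∑ t ∈ univ.filter (fun t => vup w x ≤ vup w t), w t) + (∑ t ∈ Nx, w t)
        = ∑ t, w t := by
      have h5 := Finset.sum_filter_add_sum_filter_not univ (fun t => vup w x ≤ vup w t) w
      simp only [not_le] at h5
      rw [hNdef]
      exact h5
    omega
  have hxnotN : x ∉ Nx := by simp [hNdef]
  have hxnot : x ∉ Nx ∩ U := fun hx => hxnotN (Finset.mem_inter.1 hx).1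
  have hsubup : univ.filter (fun t => x ≤ t) ⊆ insert x (Nx ∩ U) := by
    intro s hs
    simp only [mem_filter, mem_univ, true_and] at hs
    rcases eq_or_ne s x with rfl | hne
    · exact Finset.mem_insert_self _ _
    · refine Finset.mem_insert_of_mem (Finset.mem_inter.2 ⟨?_, ?_⟩)
      · have hxnotin : x ∉ univ.filter (fun t => s ≤ t) := by
          simp only [mem_filter, mem_univ, true_and]
          exact fun hsx => hne (le_antisymm hsx hs)
        have hsubset : insert x (univ.filter (fun t => s ≤ t)) ⊆ univ.filter (fun t => x ≤ t) := by
          intro r hr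
          rcases Finset.mem_insert.1 hr with rfl | hr
          · simp
          · simp only [mem_filter, mem_univ, true_and] at *
            exact hs.trans hr
        have hkey : w x + vup w s ≤ vup w x := by
          have h6 := Finset.sum_le_sum_of_subset (f := w) hsubset
          rw [Finset.sum_insert hxnotin] at h6
          exact h6
        have hwx := w_pos w h x
        simp only [hNdef, mem_filter, mem_univ, true_and]
        omega
      · simp only [hUdef, mem_filter, mem_univ, true_and]
        exact fun hsy => hxy (hs.trans hsy)
  have hup : vup w x ≤ w x + ∑ t ∈ Nx ∩ U, w t := by
    have h7 := Finset.sum_le_sum_of_subset (f := w) hsubup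
    rw [Finset.sum_insert hxnot] at h7
    exact h7
  have hynotinter : y ∉ Nx ∩ U := fun hy => by
    have := (Finset.mem_inter.1 hy).2
    simp [hUdef] at this
  have hyN : y ∈ Nx := by simp [hNdef, hv]
  have hsuby : insert y (Nx ∩ U) ⊆ Nx := by
    intro s hs
    rcases Finset.mem_insert.1 hs with rfl | hs
    · exact hyN
    · exact (Finset.mem_inter.1 hs).1
  have hlow2 : w y + ∑ t ∈ Nx ∩ U, w t ≤ ∑ t ∈ Nx, w t := by
    have h8 := Finset.sum_le_sum_of_subset (f := w) hsuby
    rwa [Finset.sum_insert hynotinter] at h8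
  omega

end Final

/-- The two linear orders induced by a complete valuation form a realizer of `P`:
`x ≤ y` iff `v(↓x) ≤ v(↓y)` and `v'(↑y) ≤ v'(↑x)`. -/
theorem stmt4 (w : P → ℕ) (h : IsCompleteValuation w) (x y : P) :
    x ≤ y ↔ (vval w (pd x) ≤ vval w (pd y) ∧ vup w y ≤ vup w x) := by
  constructor
  · intro hxy
    constructor
    · apply vval_le_of_subset
      intro s hs
      exact mem_pd.2 ((mem_pd.1 hs).trans hxy)
    · exact vup_anti w hxy
  · rintro ⟨hd, hu⟩
    by_contra hxy
    have hdne : vval w (pd x) ≠ vval w (pd y) := by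
      intro heq
      have hpp := vval_injective w h heq
      have hx : x ∈ (pd y).1 := by rw [← hpp]; exact mem_pd.2 le_rfl
      exact hxy (mem_pd.1 hx)
    have hune : vup w y ≠ vup w x := by
      intro heq
      have hcv : vval w (compUp y) = vval w (compUp x) := by
        have h1 := compUp_add_vup w x
        have h2 := compUp_add_vup w y
        omega
      have hcc := vval_injective w h hcv
      have hy : y ∈ (compUp x).1 := mem_compUp.2 hxy
      rw [← hcc] at hy
      exact (mem_compUp.1 hy) le_rfl
    have h1 := key_down w h hxy (lt_of_le_of_ne hd hdne)
    have h2 := key_up w h hxy (lt_of_le_of_ne hu hune)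
    omega
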